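/- Let E_0, A_1, B_1, E_1, A_2, B_2, E_2 be finite nonempty index types with |A_1| = |B_1| and |A_2| = |B_2|. Let R be a PSD matrix indexed by E_0 × A_1 × B_1 × E_1 such that for every bistochastic channel Choi operator C_1 indexed by A_1 × B_1, the link product R * C_1 is PSD and satisfies Tr_{E_1}[R * C_1] = 1_{E_0} (R is a bistochastic supermap from E_0 to E_1). Let S be a PSD matrix indexed by E_1 × A_2 × B_2 × E_2 such that for every bistochastic channel Choi operator C_2 indexed by A_2 × B_2, the link product S * C_2 is PSD and satisfies Tr_{E_2}[S * C_2] = 1_{E_1}. Define W indexed by E_0 × A_1 × B_1 × A_2 × B_2 × E_2 by W((e_0,a_1,b_1,a_2,b_2,e_2),(e_0',a_1',b_1',a_2',b_2',e_2')) = Σ_{e,e'} R((e_0,a_1,b_1,e),(e_0',a_1',b_1',e')) · S((e,a_2,b_2,e_2),(e',a_2',b_2',e_2')). Then W is PSD and for every pair of bistochastic channel Choi operators C_1 (indexed by A_1 × B_1) and C_2 (indexed by A_2 × B_2), the matrix V indexed by E_0 × E_2 with entries V((e_0,e_2),(e_0',e_2')) = Σ W((e_0,a_1,b_1,a_2,b_2,e_2),(e_0',a_1',b_1',a_2',b_2',e_2'))·C_1((a_1,b_1),(a_1',b_1'))·C_2((a_2,b_2),(a_2',b_2'))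 (sum over all primed and unprimed a,b indices) is PSD and satisfies Tr_{E_2}[V] = 1_{E_0}; that is, the sequential composition of two bistochastic supermaps maps every pair of bistochastic channels to a quantum channel from E_0 to E_2. -/

import Mathlib

/-!
Plugging `C₁` and `C₂` into the composite `W` gives the link product, over the shared system
`E₁`, of the channels `M = R * C₁` and `N = S * C₂`. A link product of two PSD matrices is PSD,
being the compression of `M ⊗ N` onto the diagonal of `E₁ × E₁`; the same argument applied to
`R` and `S` shows that `W` is PSD. Tracing out `E₂` replaces `N` by the identity on `E₁`, and
what remains is the partial trace of `M`, the identity on `E₀`.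
-/

open Matrix ComplexOrder

/-- The link product `R * C` of a matrix `R` on `P × A × B × F` with a matrix `C` on `A × B`. -/
noncomputable def linkPABF {P A B F : Type*} [Fintype A] [Fintype B]
    (R : Matrix (P × A × B × F) (P × A × B × F) ℂ) (C : Matrix (A × B) (A × B) ℂ) :
    Matrix (P × F) (P × F) ℂ :=
  Matrix.of fun (u u' : P × F) =>
    ∑ a : A, ∑ b : B, ∑ a' : A, ∑ b' : B,
      R (u.1, a, b, u.2) (u'.1, a', b', u'.2) * C (a, b) (a', b')

/-- The sequential composition (over the shared system `E1`) of a supermap `R` on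
`E0 × A1 × B1 × E1` with a supermap `S` on `E1 × A2 × B2 × E2`. -/
noncomputable def seqComp {E0 A1 B1 E1 A2 B2 E2 : Type*} [Fintype E1]
    (R : Matrix (E0 × A1 × B1 × E1) (E0 × A1 × B1 × E1) ℂ)
    (S : Matrix (E1 × A2 × B2 × E2) (E1 × A2 × B2 × E2) ℂ) :
    Matrix (E0 × A1 × B1 × A2 × B2 × E2) (E0 × A1 × B1 × A2 × B2 × E2) ℂ :=
  Matrix.of fun u u' =>
    ∑ e : E1, ∑ e' : E1,
      R (u.1, u.2.1, u.2.2.1, e) (u'.1, u'.2.1, u'.2.2.1, e') *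
        S (e, u.2.2.2.1, u.2.2.2.2.1, u.2.2.2.2.2)
          (e', u'.2.2.2.1, u'.2.2.2.2.1, u'.2.2.2.2.2)

/-- Plugging two channels `C1`, `C2` into a bipartite supermap `W` on
`E0 × A1 × B1 × A2 × B2 × E2`. -/
noncomputable def link2PF {E0 A1 B1 A2 B2 E2 : Type*}
    [Fintype A1] [Fintype B1] [Fintype A2] [Fintype B2]
    (W : Matrix (E0 × A1 × B1 × A2 × B2 × E2) (E0 × A1 × B1 × A2 × B2 × E2) ℂ)
    (C1 : Matrix (A1 × B1) (A1 × B1) ℂ) (C2 : Matrix (A2 × B2) (A2 × B2) ℂ) :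
    Matrix (E0 × E2) (E0 × E2) ℂ :=
  Matrix.of fun (u u' : E0 × E2) =>
    ∑ a1 : A1, ∑ b1 : B1, ∑ a2 : A2, ∑ b2 : B2,
    ∑ a1' : A1, ∑ b1' : B1, ∑ a2' : A2, ∑ b2' : B2,
      W (u.1, a1, b1, a2, b2, u.2) (u'.1, a1', b1', a2', b2', u'.2) *
        C1 (a1, b1) (a1', b1') * C2 (a2, b2) (a2', b2')

open scoped Kronecker

namespace Matrix

variable {I J K α : Type*}

noncomputable def linkOver [Fintype J] [Mul α] [AddCommMonoid α]
    (M : Matrix (I × J) (I × J) α) (N : Matrix (J × K) (J × K) α) : Matrix (I × K) (I × K) α :=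
  of fun u u' => ∑ j, ∑ j', M (u.1, j) (u'.1, j') * N (j, u.2) (j', u'.2)

theorem PosSemidef.linkOver {𝕜 : Type*} [RCLike 𝕜] [Fintype I] [Fintype J] [Fintype K]
    {M : Matrix (I × J) (I × J) 𝕜} {N : Matrix (J × K) (J × K) 𝕜}
    (hM : M.PosSemidef) (hN : N.PosSemidef) : (Matrix.linkOver M N).PosSemidef := by
  classical
  let V : Matrix ((I × J) × (J × K)) (I × K) 𝕜 :=
    of fun x u => if x = ((u.1, x.1.2), (x.1.2, u.2)) then 1 else 0
  have hcompress : Matrix.linkOver M N = Vᴴ * (M ⊗ₖ N) * V := by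
    ext u u'
    rw [Matrix.linkOver, of_apply, Finset.sum_comm]
    simp [V, mul_apply, Fintype.sum_prod_type, kroneckerMap_apply, ite_and, Finset.sum_ite_eq']
  rw [hcompress]
  exact (hM.kronecker hN).conjTranspose_mul_mul_same V

theorem sum_linkOver_apply_diag [NonAssocSemiring α] [Fintype J] [Fintype K] [DecidableEq J]
    (M : Matrix (I × J) (I × J) α) {N : Matrix (J × K) (J × K) α}
    (hN : ∀ j j', ∑ k, N (j, k) (j', k) = if j = j' then 1 else 0) (i i' : I) :
    ∑ k, linkOver M N (i, k) (i', k) = ∑ j, M (i, j) (i', j) := by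
  simp only [linkOver, of_apply]
  rw [Finset.sum_comm]
  simp [Finset.sum_comm (γ := K), ← Finset.mul_sum, hN]

end Matrix

theorem seqComp_eq_submatrix_linkOver {E0 A1 B1 E1 A2 B2 E2 : Type*} [Fintype E1]
    (R : Matrix (E0 × A1 × B1 × E1) (E0 × A1 × B1 × E1) ℂ)
    (S : Matrix (E1 × A2 × B2 × E2) (E1 × A2 × B2 × E2) ℂ) :
    seqComp R S =
      (linkOver (R.submatrix (fun p : (E0 × A1 × B1) × E1 => (p.1.1, p.1.2.1, p.1.2.2, p.2))
          (fun p : (E0 × A1 × B1) × E1 => (p.1.1, p.1.2.1, p.1.2.2, p.2))) S).submatrix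
        (fun u : E0 × A1 × B1 × A2 × B2 × E2 => ((u.1, u.2.1, u.2.2.1), u.2.2.2))
        (fun u => ((u.1, u.2.1, u.2.2.1), u.2.2.2)) :=
  rfl

theorem linkPABF_apply {P A B F : Type*} [Fintype A] [Fintype B]
    (R : Matrix (P × A × B × F) (P × A × B × F) ℂ) (C : Matrix (A × B) (A × B) ℂ)
    (u u' : P × F) :
    linkPABF R C u u' =
      ∑ p : A × B, ∑ p' : A × B, R (u.1, p.1, p.2, u.2) (u'.1, p'.1, p'.2, u'.2) * C p p' := by
  simp only [linkPABF, of_apply, Fintype.sum_prod_type]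

theorem link2PF_apply {E0 A1 B1 A2 B2 E2 : Type*}
    [Fintype A1] [Fintype B1] [Fintype A2] [Fintype B2]
    (W : Matrix (E0 × A1 × B1 × A2 × B2 × E2) (E0 × A1 × B1 × A2 × B2 × E2) ℂ)
    (C1 : Matrix (A1 × B1) (A1 × B1) ℂ) (C2 : Matrix (A2 × B2) (A2 × B2) ℂ) (u u' : E0 × E2) :
    link2PF W C1 C2 u u' =
      ∑ p : A1 × B1, ∑ q : A2 × B2, ∑ p' : A1 × B1, ∑ q' : A2 × B2,
        W (u.1, p.1, p.2, q.1, q.2, u.2) (u'.1, p'.1, p'.2, q'.1, q'.2, u'.2) *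
          C1 p p' * C2 q q' := by
  simp only [link2PF, of_apply, Fintype.sum_prod_type]

theorem link2PF_seqComp {E0 A1 B1 E1 A2 B2 E2 : Type*}
    [Fintype A1] [Fintype B1] [Fintype E1] [Fintype A2] [Fintype B2]
    (R : Matrix (E0 × A1 × B1 × E1) (E0 × A1 × B1 × E1) ℂ)
    (S : Matrix (E1 × A2 × B2 × E2) (E1 × A2 × B2 × E2) ℂ)
    (C1 : Matrix (A1 × B1) (A1 × B1) ℂ) (C2 : Matrix (A2 × B2) (A2 × B2) ℂ) :
    link2PF (seqComp R S) C1 C2 = linkOver (linkPABF R C1) (linkPABF S C2) := by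
  ext u u'
  simp only [link2PF_apply, linkOver, linkPABF_apply, seqComp, of_apply, Finset.sum_mul,
    Finset.mul_sum]
  simp only [Finset.sum_comm (γ := A1 × B1) (α := E1), Finset.sum_comm (γ := A2 × B2) (α := E1)]
  simp only [Finset.sum_comm (γ := A2 × B2) (α := A1 × B1)]
  ac_rfl

theorem stmt15_general {E0 A1 B1 E1 A2 B2 E2 : Type*}
    [Fintype E0] [Fintype A1] [Fintype B1] [Fintype E1] [Fintype A2] [Fintype B2]
    [Fintype E2]
    [DecidableEq E0] [DecidableEq A1] [DecidableEq B1] [DecidableEq E1]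
    [DecidableEq A2] [DecidableEq B2] [DecidableEq E2]
    (R : Matrix (E0 × A1 × B1 × E1) (E0 × A1 × B1 × E1) ℂ) (hRpsd : R.PosSemidef)
    (S : Matrix (E1 × A2 × B2 × E2) (E1 × A2 × B2 × E2) ℂ) (hSpsd : S.PosSemidef)
    (hR : ∀ C1 : Matrix (A1 × B1) (A1 × B1) ℂ, C1.PosSemidef →
      (∀ a a', (∑ b : B1, C1 (a, b) (a', b)) = if a = a' then 1 else 0) →
      (∀ b b', (∑ a : A1, C1 (a, b) (a, b')) = if b = b' then 1 else 0) →
      (linkPABF R C1).PosSemidef ∧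
      (∀ e e' : E0, (∑ f : E1, linkPABF R C1 (e, f) (e', f)) = if e = e' then 1 else 0))
    (hS : ∀ C2 : Matrix (A2 × B2) (A2 × B2) ℂ, C2.PosSemidef →
      (∀ a a', (∑ b : B2, C2 (a, b) (a', b)) = if a = a' then 1 else 0) →
      (∀ b b', (∑ a : A2, C2 (a, b) (a, b')) = if b = b' then 1 else 0) →
      (linkPABF S C2).PosSemidef ∧
      (∀ e e' : E1, (∑ f : E2, linkPABF S C2 (e, f) (e', f)) = if e = e' then 1 else 0)) :
    (seqComp R S).PosSemidef ∧
    (∀ (C1 : Matrix (A1 × B1) (A1 × B1) ℂ) (C2 : Matrix (A2 × B2) (A2 × B2) ℂ),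
      C1.PosSemidef →
      (∀ a a', (∑ b : B1, C1 (a, b) (a', b)) = if a = a' then 1 else 0) →
      (∀ b b', (∑ a : A1, C1 (a, b) (a, b')) = if b = b' then 1 else 0) →
      C2.PosSemidef →
      (∀ a a', (∑ b : B2, C2 (a, b) (a', b)) = if a = a' then 1 else 0) →
      (∀ b b', (∑ a : A2, C2 (a, b) (a, b')) = if b = b' then 1 else 0) →
      (link2PF (seqComp R S) C1 C2).PosSemidef ∧
      (∀ e e' : E0,
        (∑ f : E2, link2PF (seqComp R S) C1 C2 (e, f) (e', f)) =
          if e = e' then 1 else 0)) := by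
  refine ⟨?_, fun C1 C2 hC1 hC1a hC1b hC2 hC2a hC2b => ?_⟩
  · rw [seqComp_eq_submatrix_linkOver]
    exact ((hRpsd.submatrix _).linkOver hSpsd).submatrix _
  obtain ⟨hRC, hRC_trace⟩ := hR C1 hC1 hC1a hC1b
  obtain ⟨hSC, hSC_trace⟩ := hS C2 hC2 hC2a hC2b
  rw [link2PF_seqComp]
  exact ⟨hRC.linkOver hSC, fun e e' =>
    (sum_linkOver_apply_diag _ hSC_trace e e').trans (hRC_trace e e')⟩

/-- the sequential composition of two bistochastic supermaps is a
well-defined higher-order map: it is PSD and maps every pair of bistochastic channels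
to a quantum channel from `E0` to `E2`. -/
theorem stmt15 {E0 A1 B1 E1 A2 B2 E2 : Type*}
    [Fintype E0] [Fintype A1] [Fintype B1] [Fintype E1] [Fintype A2] [Fintype B2]
    [Fintype E2]
    [DecidableEq E0] [DecidableEq A1] [DecidableEq B1] [DecidableEq E1]
    [DecidableEq A2] [DecidableEq B2] [DecidableEq E2]
    [Nonempty E0] [Nonempty A1] [Nonempty B1] [Nonempty E1] [Nonempty A2] [Nonempty B2]
    [Nonempty E2]
    (hAB1 : Fintype.card A1 = Fintype.card B1)
    (hAB2 : Fintype.card A2 = Fintype.card B2)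
    (R : Matrix (E0 × A1 × B1 × E1) (E0 × A1 × B1 × E1) ℂ) (hRpsd : R.PosSemidef)
    (S : Matrix (E1 × A2 × B2 × E2) (E1 × A2 × B2 × E2) ℂ) (hSpsd : S.PosSemidef)
    (hR : ∀ C1 : Matrix (A1 × B1) (A1 × B1) ℂ, C1.PosSemidef →
      (∀ a a', (∑ b : B1, C1 (a, b) (a', b)) = if a = a' then 1 else 0) →
      (∀ b b', (∑ a : A1, C1 (a, b) (a, b')) = if b = b' then 1 else 0) →
      (linkPABF R C1).PosSemidef ∧
      (∀ e e' : E0, (∑ f : E1, linkPABF R C1 (e, f) (e', f)) = if e = e' then 1 else 0))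
    (hS : ∀ C2 : Matrix (A2 × B2) (A2 × B2) ℂ, C2.PosSemidef →
      (∀ a a', (∑ b : B2, C2 (a, b) (a', b)) = if a = a' then 1 else 0) →
      (∀ b b', (∑ a : A2, C2 (a, b) (a, b')) = if b = b' then 1 else 0) →
      (linkPABF S C2).PosSemidef ∧
      (∀ e e' : E1, (∑ f : E2, linkPABF S C2 (e, f) (e', f)) = if e = e' then 1 else 0)) :
    (seqComp R S).PosSemidef ∧
    (∀ (C1 : Matrix (A1 × B1) (A1 × B1) ℂ) (C2 : Matrix (A2 × B2) (A2 × B2) ℂ),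
      C1.PosSemidef →
      (∀ a a', (∑ b : B1, C1 (a, b) (a', b)) = if a = a' then 1 else 0) →
      (∀ b b', (∑ a : A1, C1 (a, b) (a, b')) = if b = b' then 1 else 0) →
      C2.PosSemidef →
      (∀ a a', (∑ b : B2, C2 (a, b) (a', b)) = if a = a' then 1 else 0) →
      (∀ b b', (∑ a : A2, C2 (a, b) (a, b')) = if b = b' then 1 else 0) →
      (link2PF (seqComp R S) C1 C2).PosSemidef ∧
      (∀ e e' : E0,
        (∑ f : E2, link2PF (seqComp R S) C1 C2 (e, f) (e', f)) =
          if e = e' then 1 else 0)) :=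
  stmt15_general R hRpsd S hSpsd hR hS
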